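/- arXiv:2310.03206 — 6 statements merged into one kernel-verified Lean document; each statement's English description precedes it below -/
import Mathlib

section
/- Let K be (κ,γ)-strongly stable (with κ ≥ 1) for the linear system (A₁, B₁), and let A₂, B₂ be matrices with ‖A₁ − A₂‖ ≤ ε and ‖B₁ − B₂‖ ≤ ε, where ε < γ/(2κ³). Then K is (κ, γ − 2κ³ε)-strongly stable for the linear system (A₂, B₂). -/
/- Common setup: spectral norm on matrices, Euclidean vectors, strong stability,
disturbance-state transfer matrices and surrogate states/actions from the paper
"Distributed Online Control over Networks of LTI systems". -/

open scoped Matrix.Norms.L2Operator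

/-- `d₂ × d₁` real matrices, equipped (via the open scoped instance) with the
spectral (L2 operator) norm. -/
abbrev Mat (p q : ℕ) := Matrix (Fin p) (Fin q) ℝ

/-- Euclidean vectors. -/
abbrev Vec (d : ℕ) := EuclideanSpace ℝ (Fin d)

/-- Matrix-vector multiplication as a map between Euclidean spaces. -/
noncomputable def mulV {m n : Type*} [Fintype m] [Fintype n] (A : Matrix m n ℝ)
    (x : EuclideanSpace ℝ n) : EuclideanSpace ℝ m :=
  (WithLp.equiv 2 _).symm (A.mulVec ((WithLp.equiv 2 _) x))

/-- `K` is `(κ, γ)`-strongly stable for the system `(A, B)`. -/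
noncomputable def StronglyStable {d₁ d₂ : ℕ} (κ γ : ℝ) (A : Mat d₁ d₁)
    (B : Mat d₁ d₂) (K : Mat d₂ d₁) : Prop :=
  ‖K‖ ≤ κ ∧ ∃ H L : Mat d₁ d₁,
    IsUnit H ∧ A - B * K = H * L * H⁻¹ ∧ ‖L‖ ≤ 1 - γ ∧ ‖H‖ ≤ κ ∧ ‖H⁻¹‖ ≤ κ

/-- The disturbance-state transfer matrix `Ψ^{K,h}_{t,i}(M_{t−h:t} | A, B)`,
where `M s i` denotes `M_s^{[i]}`. -/
noncomputable def Psi {d₁ d₂ : ℕ} (H : ℕ) (A : Mat d₁ d₁) (B : Mat d₁ d₂) (K : Mat d₂ d₁)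
    (M : ℕ → ℕ → Mat d₂ d₁) (t h i : ℕ) : Mat d₁ d₁ :=
  (if i ≤ h then (A - B * K) ^ i else 0) +
    ∑ j ∈ Finset.range (h + 1),
      if j < i ∧ i - j ≤ H then (A - B * K) ^ j * B * M (t - j) (i - j - 1) else 0

/-- The surrogate state `y^K_{t+1}(M_{t−H:t} | A, B, {w})`. -/
noncomputable def ySurr {d₁ d₂ : ℕ} (H : ℕ) (A : Mat d₁ d₁) (B : Mat d₁ d₂) (K : Mat d₂ d₁)
    (M : ℕ → ℕ → Mat d₂ d₁) (w : ℤ → Vec d₁) (t : ℕ) : Vec d₁ :=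
  ∑ i ∈ Finset.range (2 * H + 1), mulV (Psi H A B K M t H i) (w ((t : ℤ) - i))

/-- The surrogate action `v^K_{t+1}(M_{t−H:t} | A, B, {w})`. -/
noncomputable def vSurr {d₁ d₂ : ℕ} (H : ℕ) (A : Mat d₁ d₁) (B : Mat d₁ d₂) (K : Mat d₂ d₁)
    (M : ℕ → ℕ → Mat d₂ d₁) (w : ℤ → Vec d₁) (t : ℕ) : Vec d₂ :=
  -mulV K (ySurr H A B K M w t) + ∑ i ∈ Finset.range H, mulV (M (t + 1) i) (w ((t : ℤ) - i))

/-- State-action pairs with the L2 (Euclidean) product norm. -/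
abbrev XU (d₁ d₂ : ℕ) := WithLp 2 (Vec d₁ × Vec d₂)

/-- Bundling a state and an action into an L2 state-action pair. -/
noncomputable def pairXU {d₁ d₂ : ℕ} (x : Vec d₁) (u : Vec d₂) : XU d₁ d₂ :=
  (WithLp.equiv 2 _).symm (x, u)

/-- The Euclidean space of parameter tuples `M = (M^{[0]}, …, M^{[H−1]})`;
its norm is the Frobenius norm of the tuple. -/
abbrev MTup (Hn d₁ d₂ : ℕ) := EuclideanSpace ℝ (Fin Hn × Fin d₂ × Fin d₁)

/-- The `i`-th matrix component `M^{[i]}` of a parameter tuple. -/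
noncomputable def toMat {Hn d₁ d₂ : ℕ} (M : MTup Hn d₁ d₂) (i : ℕ) : Mat d₂ d₁ :=
  fun a b => if h : i < Hn then M (⟨i, h⟩, a, b) else 0

/-! Write `A₂ - B₂K = (A₁ - B₁K) + Δ` with `Δ = (A₂ - A₁) - (B₂ - B₁)K`, so `‖Δ‖ ≤ ε + εκ`.
Keeping the same `H`, the new closed loop is `H (L + H⁻¹ΔH) H⁻¹`, and
`‖L + H⁻¹ΔH‖ ≤ 1 - γ + κ²(ε + εκ) ≤ 1 - (γ - 2κ³ε)` since `κ ≥ 1`. -/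

theorem Matrix.mul_add_conj_mul_nonsing_inv {n α : Type*} [Fintype n] [DecidableEq n]
    [CommRing α] {H : Matrix n n α} (hH : IsUnit H) (L Δ : Matrix n n α) :
    H * (L + H⁻¹ * Δ * H) * H⁻¹ = H * L * H⁻¹ + Δ := by
  have hdet : IsUnit H.det := (Matrix.isUnit_iff_isUnit_det H).mp hH
  rw [mul_add, add_mul, mul_assoc H⁻¹, Matrix.mul_nonsing_inv_cancel_left _ _ hdet,
    Matrix.mul_nonsing_inv_cancel_right _ _ hdet]

theorem norm_closedLoop_sub_closedLoop_le {m n : Type*} [Fintype m] [DecidableEq m]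
    [Fintype n] [DecidableEq n] (A₁ A₂ : Matrix m m ℝ) (B₁ B₂ : Matrix m n ℝ) (K : Matrix n m ℝ) :
    ‖(A₂ - B₂ * K) - (A₁ - B₁ * K)‖ ≤ ‖B₁ - B₂‖ * ‖K‖ + ‖A₁ - A₂‖ :=
  calc ‖(A₂ - B₂ * K) - (A₁ - B₁ * K)‖ = ‖(B₁ - B₂) * K - (A₁ - A₂)‖ := by
        rw [Matrix.sub_mul]; abel_nf
    _ ≤ ‖(B₁ - B₂) * K‖ + ‖A₁ - A₂‖ := norm_sub_le _ _
    _ ≤ ‖B₁ - B₂‖ * ‖K‖ + ‖A₁ - A₂‖ := by grw [Matrix.l2_opNorm_mul]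

namespace StronglyStable

variable {d₁ d₂ : ℕ} {κ γ : ℝ} {A : Mat d₁ d₁} {B : Mat d₁ d₂} {K : Mat d₂ d₁}

theorem anti {γ' : ℝ} (hγ : γ' ≤ γ) (h : StronglyStable κ γ A B K) :
    StronglyStable κ γ' A B K := by
  obtain ⟨hK, H, L, hH, hfac, hL, hHn, hHin⟩ := h
  exact ⟨hK, H, L, hH, hfac, hL.trans (by linarith), hHn, hHin⟩

theorem of_norm_closedLoop_sub_le {A' : Mat d₁ d₁} {B' : Mat d₁ d₂} {δ : ℝ}
    (h : StronglyStable κ γ A B K) (hδ : ‖(A' - B' * K) - (A - B * K)‖ ≤ δ) :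
    StronglyStable κ (γ - κ ^ 2 * δ) A' B' K := by
  obtain ⟨hK, H, L, hH, hfac, hL, hHn, hHin⟩ := h
  set Δ := (A' - B' * K) - (A - B * K)
  refine ⟨hK, H, L + H⁻¹ * Δ * H, hH, ?_, ?_, hHn, hHin⟩
  · rw [Matrix.mul_add_conj_mul_nonsing_inv hH, ← hfac]
    exact (add_sub_cancel _ _).symm
  · have hκ : 0 ≤ κ := (norm_nonneg H).trans hHn
    have hδ0 : 0 ≤ δ := (norm_nonneg Δ).trans hδ
    calc ‖L + H⁻¹ * Δ * H‖ ≤ ‖L‖ + ‖H⁻¹‖ * ‖Δ‖ * ‖H‖ :=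
          (norm_add_le _ _).trans (add_le_add_right norm_mul₃_le _)
      _ ≤ (1 - γ) + κ * δ * κ := by gcongr
      _ = 1 - (γ - κ ^ 2 * δ) := by ring

end StronglyStable

theorem strongly_stable_of_close_system_general {d₁ d₂ : ℕ} (κ γ ε : ℝ)
    (hκ : 1 ≤ κ)
    (A₁ A₂ : Mat d₁ d₁) (B₁ B₂ : Mat d₁ d₂) (K : Mat d₂ d₁)
    (hss : StronglyStable κ γ A₁ B₁ K)
    (hA : ‖A₁ - A₂‖ ≤ ε) (hB : ‖B₁ - B₂‖ ≤ ε) :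
    StronglyStable κ (γ - 2 * κ ^ 3 * ε) A₂ B₂ K := by
  have hε : 0 ≤ ε := (norm_nonneg _).trans hA
  have hΔ : ‖(A₂ - B₂ * K) - (A₁ - B₁ * K)‖ ≤ ε * κ + ε :=
    (norm_closedLoop_sub_closedLoop_le A₁ A₂ B₁ B₂ K).trans
      (add_le_add (mul_le_mul hB hss.1 (norm_nonneg _) hε) hA)
  refine (hss.of_norm_closedLoop_sub_le hΔ).anti ?_
  nlinarith [mul_nonneg (mul_nonneg hε (sq_nonneg κ)) (sub_nonneg.mpr hκ)]

/-- a `(κ,γ)`-strongly stable policy for `(A₁,B₁)` is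
`(κ, γ − 2κ³ε)`-strongly stable for any `ε`-close system `(A₂,B₂)`. -/
theorem strongly_stable_of_close_system {d₁ d₂ : ℕ} (κ γ ε : ℝ)
    (hκ : 1 ≤ κ) (hγ0 : 0 < γ) (hγ1 : γ ≤ 1)
    (A₁ A₂ : Mat d₁ d₁) (B₁ B₂ : Mat d₁ d₂) (K : Mat d₂ d₁)
    (hss : StronglyStable κ γ A₁ B₁ K)
    (hA : ‖A₁ - A₂‖ ≤ ε) (hB : ‖B₁ - B₂‖ ≤ ε)
    (hε : ε < γ / (2 * κ ^ 3)) :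
    StronglyStable κ (γ - 2 * κ ^ 3 * ε) A₂ B₂ K :=
  strongly_stable_of_close_system_general κ γ ε hκ A₁ A₂ B₁ B₂ K hss hA hB
end

section
/- Let M and ΔM be real n×n matrices such that ‖M‖ ≤ 1−γ and ‖M + ΔM‖ ≤ 1−γ for some 0 < γ < 1, where ‖·‖ is the spectral norm. Then the series Σ_{t=0}^{∞} ‖(M + ΔM)^t − M^t‖ converges and Σ_{t=0}^{∞} ‖(M + ΔM)^t − M^t‖ ≤ γ^{−2} ‖ΔM‖. -/
/- Common setup: spectral norm on matrices, Euclidean vectors, strong stability,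
disturbance-state transfer matrices and surrogate states/actions from the paper
"Distributed Online Control over Networks of LTI systems". -/

open scoped Matrix.Norms.L2Operator

/-!
Telescoping `b^(n+2) - a^(n+2) = b (b^(n+1) - a^(n+1)) + (b - a) a^(n+1)` gives the
mean-value bound `‖b^(n+1) - a^(n+1)‖ ≤ (n+1) r^n ‖b - a‖` whenever `‖a‖, ‖b‖ ≤ r`, and
`∑ (n+1) r^n = (1 - r)⁻²`. With `r = 1 - γ` this is `γ⁻² ‖ΔM‖`.
-/

theorem hasSum_succ_mul_geometric {r : ℝ} (hr₀ : 0 ≤ r) (hr₁ : r < 1) :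
    HasSum (fun n : ℕ => ((n : ℝ) + 1) * r ^ n) ((1 - r) ^ 2)⁻¹ := by
  have hr : ‖r‖ < 1 := by rwa [Real.norm_of_nonneg hr₀]
  simpa using hasSum_choose_mul_geometric_of_norm_lt_one 1 hr

section SeminormedRing

variable {R : Type*} [SeminormedRing R] {a b : R} {r : ℝ}

theorem norm_pow_succ_sub_pow_succ_le (ha : ‖a‖ ≤ r) (hb : ‖b‖ ≤ r) (n : ℕ) :
    ‖b ^ (n + 1) - a ^ (n + 1)‖ ≤ ((n : ℝ) + 1) * r ^ n * ‖b - a‖ := by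
  induction n with
  | zero => simp
  | succ n ih =>
    have hr : 0 ≤ r := (norm_nonneg a).trans ha
    have telescope : b ^ (n + 2) - a ^ (n + 2) =
        b * (b ^ (n + 1) - a ^ (n + 1)) + (b - a) * a ^ (n + 1) := by
      simp only [pow_succ' _ (n + 1)]
      noncomm_ring
    have ha_pow : ‖a ^ (n + 1)‖ ≤ r ^ (n + 1) :=
      (norm_pow_le' a n.succ_pos).trans (pow_le_pow_left₀ (norm_nonneg a) ha _)
    calc ‖b ^ (n + 2) - a ^ (n + 2)‖
        ≤ ‖b‖ * ‖b ^ (n + 1) - a ^ (n + 1)‖ + ‖b - a‖ * ‖a ^ (n + 1)‖ := by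
          rw [telescope]
          exact (norm_add_le _ _).trans (add_le_add (norm_mul_le _ _) (norm_mul_le _ _))
      _ ≤ r * (((n : ℝ) + 1) * r ^ n * ‖b - a‖) + ‖b - a‖ * r ^ (n + 1) := by
          gcongr
      _ = (((n + 1 : ℕ) : ℝ) + 1) * r ^ (n + 1) * ‖b - a‖ := by
          push_cast
          ring

theorem summable_norm_pow_sub_pow_and_tsum_le (hr : r < 1) (ha : ‖a‖ ≤ r) (hb : ‖b‖ ≤ r) :
    Summable (fun n : ℕ => ‖b ^ n - a ^ n‖) ∧
      ∑' n : ℕ, ‖b ^ n - a ^ n‖ ≤ ((1 - r) ^ 2)⁻¹ * ‖b - a‖ := by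
  have hbound : HasSum (fun n : ℕ => ((n : ℝ) + 1) * r ^ n * ‖b - a‖)
      (((1 - r) ^ 2)⁻¹ * ‖b - a‖) :=
    (hasSum_succ_mul_geometric ((norm_nonneg a).trans ha) hr).mul_right _
  have hle := norm_pow_succ_sub_pow_succ_le ha hb
  have hsucc : Summable (fun n : ℕ => ‖b ^ (n + 1) - a ^ (n + 1)‖) :=
    hbound.summable.of_nonneg_of_le (fun _ => norm_nonneg _) hle
  have hsum : Summable (fun n : ℕ => ‖b ^ n - a ^ n‖) := (summable_nat_add_iff 1).mp hsucc
  refine ⟨hsum, ?_⟩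
  rw [hsum.tsum_eq_zero_add, pow_zero, pow_zero, sub_self, norm_zero, zero_add]
  exact hsucc.tsum_le_tsum hle hbound.summable |>.trans_eq hbound.tsum_eq

end SeminormedRing

theorem power_difference_series_bound_general {n : ℕ} (γ : ℝ) (hγ0 : 0 < γ)
    (M ΔM : Mat n n) (hM : ‖M‖ ≤ 1 - γ) (hMΔ : ‖M + ΔM‖ ≤ 1 - γ) :
    Summable (fun t : ℕ => ‖(M + ΔM) ^ t - M ^ t‖) ∧
      ∑' t : ℕ, ‖(M + ΔM) ^ t - M ^ t‖ ≤ (γ ^ 2)⁻¹ * ‖ΔM‖ := by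
  have h := summable_norm_pow_sub_pow_and_tsum_le (by linarith) hM hMΔ
  rwa [add_sub_cancel_left, sub_sub_cancel] at h

/-- the series `Σ_t ‖(M + ΔM)^t − M^t‖` converges and is at most
`γ⁻² ‖ΔM‖`. -/
theorem power_difference_series_bound {n : ℕ} (γ : ℝ) (hγ0 : 0 < γ) (hγ1 : γ < 1)
    (M ΔM : Mat n n) (hM : ‖M‖ ≤ 1 - γ) (hMΔ : ‖M + ΔM‖ ≤ 1 - γ) :
    Summable (fun t : ℕ => ‖(M + ΔM) ^ t - M ^ t‖) ∧
      ∑' t : ℕ, ‖(M + ΔM) ^ t - M ^ t‖ ≤ (γ ^ 2)⁻¹ * ‖ΔM‖ :=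
  power_difference_series_bound_general γ hγ0 M ΔM hM hMΔ
end

section
/- Let K be (κ′,γ′)-strongly stable for the system (A′, B′) with ‖B′‖ ≤ κ_{B′}, and let {M_s} be a sequence of parameter tuples with ‖M_s^{[i]}‖ ≤ C(1−γ)^i for all s and 0 ≤ i ≤ H−1, where γ ≥ γ′. Then for all t, all 0 ≤ h ≤ t and all 0 ≤ i ≤ H + h, the disturbance-state transfer matrix satisfies ‖Ψ^{K,h}_{t,i}(M_{t−h:t}|A′,B′)‖ ≤ (κ′)²(1−γ′)^i·1_{i≤h} + H κ_{B′}(κ′)² C (1−γ′)^{i−1}. -/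
/- Common setup: spectral norm on matrices, Euclidean vectors, strong stability,
disturbance-state transfer matrices and surrogate states/actions from the paper
"Distributed Online Control over Networks of LTI systems". -/

open scoped Matrix.Norms.L2Operator

/-! Conjugating by `H` turns the powers of the closed loop matrix into `H Lʲ H⁻¹`, so
`‖(A' - B'K)ʲ‖ ≤ κ'² (1 - γ')ʲ`. Every summand `(A' - B'K)ʲ B' M_{t-j}^{[i-j-1]}` of `Ψ` is then
bounded by `κ_{B'} κ'² C (1 - γ')^{i-1}`, the exponents `j` and `i - j - 1` adding up to `i - 1`,
and at most `H` of them are present, since `i - H ≤ j < i`. The decay of `M` at rate `1 - γ` is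
also decay at the slower rate `1 - γ' ≥ 0`. -/

open Finset

theorem Matrix.l2_opNorm_one_le {n 𝕜 : Type*} [Fintype n] [DecidableEq n] [RCLike 𝕜] :
    ‖(1 : Matrix n n 𝕜)‖ ≤ 1 := by
  rw [Matrix.cstar_norm_def, map_one]
  exact ContinuousLinearMap.norm_id_le

theorem Matrix.l2_opNorm_pow_le {n 𝕜 : Type*} [Fintype n] [DecidableEq n] [RCLike 𝕜]
    (A : Matrix n n 𝕜) (k : ℕ) : ‖A ^ k‖ ≤ ‖A‖ ^ k := by
  rcases k.eq_zero_or_pos with rfl | hk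
  · simpa using Matrix.l2_opNorm_one_le
  · exact norm_pow_le' A hk

namespace StronglyStable

variable {d₁ d₂ : ℕ} {κ γ : ℝ} {A : Mat d₁ d₁} {B : Mat d₁ d₂} {K : Mat d₂ d₁}

theorem one_sub_nonneg (hK : StronglyStable κ γ A B K) : 0 ≤ 1 - γ := by
  obtain ⟨-, -, L, -, -, hL, -⟩ := hK
  exact (norm_nonneg L).trans hL

theorem norm_pow_le (hK : StronglyStable κ γ A B K) (j : ℕ) :
    ‖(A - B * K) ^ j‖ ≤ κ ^ 2 * (1 - γ) ^ j := by
  have hγ := hK.one_sub_nonneg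
  obtain ⟨-, -, L, ⟨u, rfl⟩, hA, hL, hu, hu_inv⟩ := hK
  rw [hA, ← Matrix.coe_units_inv, Units.conj_pow]
  rw [← Matrix.coe_units_inv] at hu_inv
  have hLj : ‖L ^ j‖ ≤ (1 - γ) ^ j :=
    (Matrix.l2_opNorm_pow_le L j).trans (pow_le_pow_left₀ (norm_nonneg L) hL j)
  calc ‖(u : Mat d₁ d₁) * L ^ j * ↑u⁻¹‖
      ≤ ‖(u : Mat d₁ d₁)‖ * ‖L ^ j‖ * ‖(↑u⁻¹ : Mat d₁ d₁)‖ := norm_mul₃_le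
    _ ≤ κ * (1 - γ) ^ j * κ := by
      have hκ : 0 ≤ κ := (norm_nonneg _).trans hu
      gcongr
    _ = κ ^ 2 * (1 - γ) ^ j := by ring

end StronglyStable

theorem le_mul_pow_of_le_mul_pow {a : ℕ → ℝ} {n : ℕ} {C r r' : ℝ} (ha : ∀ k, 0 ≤ a k)
    (h : ∀ k < n, a k ≤ C * r ^ k) (hr : r ≤ r') {k : ℕ} (hk : k < n) :
    a k ≤ C * r' ^ k := by
  have hC : 0 ≤ C := by simpa using (ha 0).trans (h 0 (by omega))
  rcases le_or_gt 0 r with hr0 | hr0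
  · exact (h k hk).trans (by gcongr)
  rcases k.eq_zero_or_pos with rfl | hk0
  · simpa using h 0 hk
  -- `0 ≤ a 1 ≤ C r` with `r < 0` forces `C = 0`.
  have hC0 : C = 0 := by nlinarith [ha 1, h 1 (by omega)]
  simpa [hC0] using h k hk

theorem card_filter_lt_sub_le (s : Finset ℕ) (i n : ℕ) :
    #{j ∈ s | j < i ∧ i - j ≤ n} ≤ n := by
  have hsub : {j ∈ s | j < i ∧ i - j ≤ n} ⊆ Ico (i - n) i := by
    intro j hj
    simp only [mem_filter, mem_Ico] at hj ⊢
    omega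
  exact (card_le_card hsub).trans (by rw [Nat.card_Ico]; omega)

section Psi

variable {d₁ d₂ : ℕ} {Hn : ℕ} {A : Mat d₁ d₁} {B : Mat d₁ d₂} {K : Mat d₂ d₁}
  {M : ℕ → ℕ → Mat d₂ d₁} {P ρ b C : ℝ}

theorem norm_pow_mul_mul_le (hA : ∀ j, ‖(A - B * K) ^ j‖ ≤ P * ρ ^ j) (hB : ‖B‖ ≤ b)
    (hM : ∀ s k, k < Hn → ‖M s k‖ ≤ C * ρ ^ k) (hP : 0 ≤ P) (hρ : 0 ≤ ρ)
    (s : ℕ) {i j : ℕ} (hji : j < i) (hiHn : i - j ≤ Hn) :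
    ‖(A - B * K) ^ j * B * M s (i - j - 1)‖ ≤ b * P * C * ρ ^ (i - 1) := by
  have hb : 0 ≤ b := (norm_nonneg B).trans hB
  calc ‖(A - B * K) ^ j * B * M s (i - j - 1)‖
      ≤ ‖(A - B * K) ^ j‖ * ‖B‖ * ‖M s (i - j - 1)‖ :=
        (Matrix.l2_opNorm_mul _ _).trans (by gcongr; exact Matrix.l2_opNorm_mul _ _)
    _ ≤ P * ρ ^ j * b * (C * ρ ^ (i - j - 1)) := by
        gcongr
        exacts [hA j, hM s _ (by omega)]
    _ = b * P * C * ρ ^ (i - 1) := by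
        rw [show i - 1 = j + (i - j - 1) by omega, pow_add]
        ring

theorem norm_Psi_le (hA : ∀ j, ‖(A - B * K) ^ j‖ ≤ P * ρ ^ j) (hB : ‖B‖ ≤ b)
    (hM : ∀ s k, k < Hn → ‖M s k‖ ≤ C * ρ ^ k) (hP : 0 ≤ P) (hρ : 0 ≤ ρ) (hC : 0 ≤ C)
    (t h i : ℕ) :
    ‖Psi Hn A B K M t h i‖ ≤ (if i ≤ h then P * ρ ^ i else 0) + Hn * b * P * C * ρ ^ (i - 1) := by
  have hb : 0 ≤ b := (norm_nonneg B).trans hB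
  unfold Psi
  refine (norm_add_le _ _).trans (add_le_add ?_ ?_)
  · split_ifs
    exacts [hA i, norm_zero.le]
  rw [← sum_filter]
  calc _ ≤ #{j ∈ range (h + 1) | j < i ∧ i - j ≤ Hn} • (b * P * C * ρ ^ (i - 1)) :=
        (norm_sum_le _ _).trans <| sum_le_card_nsmul _ _ _ fun j hj ↦ by
          obtain ⟨hji, hiHn⟩ := (mem_filter.mp hj).2
          exact norm_pow_mul_mul_le hA hB hM hP hρ _ hji hiHn
    _ ≤ Hn * (b * P * C * ρ ^ (i - 1)) := by
        rw [nsmul_eq_mul]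
        gcongr
        exact_mod_cast card_filter_lt_sub_le _ i Hn
    _ = Hn * b * P * C * ρ ^ (i - 1) := by ring

end Psi

theorem psi_norm_bound_general {d₁ d₂ : ℕ} (κ' γ' γ C κB' : ℝ) (Hn : ℕ) (hH : 1 ≤ Hn)
    (hγγ' : γ' ≤ γ)
    (A' : Mat d₁ d₁) (B' : Mat d₁ d₂) (K : Mat d₂ d₁)
    (hss : StronglyStable κ' γ' A' B' K) (hB' : ‖B'‖ ≤ κB')
    (M : ℕ → ℕ → Mat d₂ d₁)
    (hM : ∀ s i, i < Hn → ‖M s i‖ ≤ C * (1 - γ) ^ i)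
    (t h i : ℕ) :
    ‖Psi Hn A' B' K M t h i‖ ≤
      (if i ≤ h then κ' ^ 2 * (1 - γ') ^ i else 0) +
        Hn * κB' * κ' ^ 2 * C * (1 - γ') ^ (i - 1) := by
  have hC : 0 ≤ C := by simpa using (norm_nonneg _).trans (hM 0 0 hH)
  have hM' : ∀ s k, k < Hn → ‖M s k‖ ≤ C * (1 - γ') ^ k := fun s _ hk ↦
    le_mul_pow_of_le_mul_pow (fun _ ↦ norm_nonneg _) (hM s) (by linarith) hk
  exact norm_Psi_le hss.norm_pow_le hB' hM' (sq_nonneg κ') hss.one_sub_nonneg hC t h i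

/-- norm bound on the disturbance-state transfer matrix. -/
theorem psi_norm_bound {d₁ d₂ : ℕ} (κ' γ' γ C κB' : ℝ) (Hn : ℕ) (hH : 1 ≤ Hn)
    (hκ' : 1 ≤ κ') (hγ'0 : 0 < γ') (hγ'1 : γ' ≤ 1) (hγγ' : γ' ≤ γ)
    (A' : Mat d₁ d₁) (B' : Mat d₁ d₂) (K : Mat d₂ d₁)
    (hss : StronglyStable κ' γ' A' B' K) (hB' : ‖B'‖ ≤ κB')
    (M : ℕ → ℕ → Mat d₂ d₁)
    (hM : ∀ s i, i < Hn → ‖M s i‖ ≤ C * (1 - γ) ^ i)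
    (t h i : ℕ) (hh : h ≤ t) (hi : i ≤ Hn + h) :
    ‖Psi Hn A' B' K M t h i‖ ≤
      (if i ≤ h then κ' ^ 2 * (1 - γ') ^ i else 0) +
        Hn * κB' * κ' ^ 2 * C * (1 - γ') ^ (i - 1) :=
  psi_norm_bound_general κ' γ' γ C κB' Hn hH hγγ' A' B' K hss hB' M hM t h i
end

section
/- Let A ∈ ℝ^{d₁×d₁}, B ∈ ℝ^{d₁×d₂}, and K, K* ∈ ℝ^{d₂×d₁}. Then for every integer i ≥ 1, (A − BK)^i + Σ_{j=0}^{i−1} (A − BK)^j B (K − K*) (A − BK*)^{i−j−1} = (A − BK*)^i. Consequently, defining M*^{[l]} := (K − K*)(A − BK*)^l for 0 ≤ l ≤ H−1 and applying the time-invariant tuple M* in the disturbance-state transfer matrix, Ψ^{K,t−1}_{t,i}(M*, …, M* | A, B) = (A − BK*)^i for every 0 ≤ i ≤ min(H, t−1). -/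
/- Common setup: spectral norm on matrices, Euclidean vectors, strong stability,
disturbance-state transfer matrices and surrogate states/actions from the paper
"Distributed Online Control over Networks of LTI systems". -/

open scoped Matrix.Norms.L2Operator

open Finset

/-- Noncommutative form of `Commute.geom_sum₂_mul`. -/
theorem sum_range_pow_mul_sub_mul_pow {R : Type*} [Ring R] (P Q : R) (n : ℕ) :
    ∑ j ∈ range n, P ^ j * (Q - P) * Q ^ (n - j - 1) = Q ^ n - P ^ n := by
  have htelescope : ∀ j ∈ range n, P ^ j * (Q - P) * Q ^ (n - j - 1) =
      P ^ j * Q ^ (n - j) - P ^ (j + 1) * Q ^ (n - (j + 1)) := by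
    intro j hj
    obtain ⟨k, rfl⟩ := Nat.exists_eq_add_of_lt (mem_range.mp hj)
    rw [show j + k + 1 - j - 1 = k by omega, show j + k + 1 - j = k + 1 by omega,
      show j + k + 1 - (j + 1) = k by omega, pow_succ' Q, pow_succ, mul_sub, sub_mul]
    simp only [mul_assoc]
  rw [sum_congr rfl htelescope, sum_range_sub' (fun j => P ^ j * Q ^ (n - j))]
  simp

theorem Psi_eq_of_le {d₁ d₂ : ℕ} (H : ℕ) (A : Mat d₁ d₁) (B : Mat d₁ d₂) (K : Mat d₂ d₁)
    (M : ℕ → ℕ → Mat d₂ d₁) {t h i : ℕ} (hih : i ≤ h) (hiH : i ≤ H) :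
    Psi H A B K M t h i =
      (A - B * K) ^ i + ∑ j ∈ range i, (A - B * K) ^ j * B * M (t - j) (i - j - 1) := by
  have hsub : range i ⊆ range (h + 1) := range_subset_range.mpr (by omega)
  rw [Psi, if_pos hih, ← sum_subset hsub fun j _ hj => if_neg fun hj' => hj (mem_range.mpr hj'.1)]
  exact congrArg _ (sum_congr rfl fun j hj => if_pos ⟨mem_range.mp hj, by omega⟩)

/-- the telescoping identity behind approximating a linear policy
by a time-invariant DFC, and the resulting closed form of the transfer matrix. -/
theorem dfc_approximates_linear_policy {d₁ d₂ : ℕ} (Hn : ℕ)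
    (A : Mat d₁ d₁) (B : Mat d₁ d₂) (K Kstar : Mat d₂ d₁) :
    (∀ i : ℕ, 1 ≤ i →
      (A - B * K) ^ i +
        ∑ j ∈ Finset.range i,
          (A - B * K) ^ j * B * ((K - Kstar) * (A - B * Kstar) ^ (i - j - 1)) =
      (A - B * Kstar) ^ i) ∧
    (∀ t i : ℕ, i ≤ min Hn (t - 1) →
      Psi Hn A B K (fun _ l => (K - Kstar) * (A - B * Kstar) ^ l) t (t - 1) i =
        (A - B * Kstar) ^ i) := by
  have hdiff : (A - B * Kstar) - (A - B * K) = B * (K - Kstar) := by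
    rw [Matrix.mul_sub]; abel
  have htelescope : ∀ i : ℕ, (A - B * K) ^ i + ∑ j ∈ range i,
      (A - B * K) ^ j * B * ((K - Kstar) * (A - B * Kstar) ^ (i - j - 1)) =
      (A - B * Kstar) ^ i := by
    intro i
    simp only [← Matrix.mul_assoc, Matrix.mul_assoc _ B, ← hdiff]
    rw [sum_range_pow_mul_sub_mul_pow, add_sub_cancel]
  refine ⟨fun i _ => htelescope i, fun t i hi => ?_⟩
  rw [Psi_eq_of_le _ _ _ _ _ (hi.trans (min_le_right _ _))
    (hi.trans (min_le_left _ _))]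
  exact htelescope i
end

section
/- Let 𝓜 := {M = (M^{[0]},…,M^{[H−1]}) ∈ (ℝ^{d₂×d₁})^H : ‖M^{[i]}‖ ≤ 2κ³(1−γ)^i} and let Π_𝓜 denote the Frobenius-norm projection onto this closed convex set. Let P ∈ ℝ^{m×m} be a doubly stochastic matrix satisfying the mixing bound Σ_{j=1}^m |[P^k]_{ji} − 1/m| ≤ √m β^k for all i and all k ≥ 1, with 0 ≤ β < 1. Suppose m agents run, for t = 1, 2, …, the iteration M̂_{i,t+1} = Σ_{j=1}^m [P]_{ji} M_{j,t} − η g_{i,t} and M_{i,t+1} = Π_𝓜(M̂_{i,t+1}), with a common initialization M_{1,1} = ⋯ = M_{m,1} ∈ 𝓜 and step size η > 0, where each update direction satisfies ‖g_{i,t}‖_F ≤ G with G := G_c D √d · d · √H · (κ⁴W/γ + W), d := max(d₁,d₂), and D := W(κ² + 2Hκ⁶)/(γ(1 − κ²(1−γ)^{H+1})) + 2Wκ³/γ. Define M̄_t := (1/m) Σ_{i=1}^m M_{i,t}. Then for every agent i and every t: ‖M̄_t − M_{i,t}‖_F ≤ 2ηG√m/(1−β) and ‖M̄_t − M̂_{i,t+1}‖_F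 ≤ 2ηG√m/(1−β). -/
/- Common setup: spectral norm on matrices, Euclidean vectors, strong stability,
disturbance-state transfer matrices and surrogate states/actions from the paper
"Distributed Online Control over Networks of LTI systems". -/

open scoped Matrix.Norms.L2Operator

/-- The constraint set `𝓜` of the D-DFC algorithm. -/
def MClass (Hn d₁ d₂ : ℕ) (κ γ : ℝ) : Set (MTup Hn d₁ d₂) :=
  {Mv | ∀ i, i < Hn → ‖toMat Mv i‖ ≤ 2 * κ ^ 3 * (1 - γ) ^ i}

/-!
Each projected iterate `M_{i,t+1}` is within `2ηG` of its gossip average `∑ⱼ P_{ji} M_{j,t}`: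
that average lies in the convex set `𝓜`, so the projection is no farther from `M̂_{i,t+1}` than
the average is, namely `η‖g_{i,t}‖`. Call this gap `e_{i,t}`. With `J` the averaging matrix, the
disagreements `d_k(t) := (J - Pᵏ)ᵀ M_t` vanish at the common initialization and, since `PJ = J`,
satisfy `d_k(t+1) = d_{k+1}(t) + (J - Pᵏ)ᵀ e_t`. The mixing bound then gives
`‖d_k(t)‖ ≤ 2ηG √m βᵏ / (1 - β)` by induction on `t`; the two claims are `k = 0` and `k = 1`.
-/

open Finset

theorem two_sub_two_div_le_sqrt {x : ℝ} (hx : 1 ≤ x) : 2 - 2 / x ≤ √x := by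
  obtain ⟨s, hs, rfl⟩ : ∃ s, 1 ≤ s ∧ x = s ^ 2 :=
    ⟨√x, Real.one_le_sqrt.mpr hx, (Real.sq_sqrt (by linarith)).symm⟩
  rw [Real.sqrt_sq (by linarith), sub_le_iff_le_add, ← sub_le_iff_le_add',
    le_div_iff₀ (by positivity)]
  nlinarith [mul_nonneg (sq_nonneg (3 * s - 4)) (by linarith : (0 : ℝ) ≤ s)]

theorem norm_sub_le_two_mul_of_forall_norm_sub_le {E : Type*} [SeminormedAddCommGroup E]
    {s : Set E} {p h z : E} (hp : ∀ y ∈ s, ‖p - h‖ ≤ ‖y - h‖) (hz : z ∈ s) :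
    ‖p - z‖ ≤ 2 * ‖z - h‖ :=
  calc ‖p - z‖ ≤ ‖p - h‖ + ‖h - z‖ := norm_sub_le_norm_sub_add_norm_sub _ _ _
    _ ≤ 2 * ‖z - h‖ := by rw [norm_sub_rev h]; linarith [hp z hz]

namespace Matrix

variable {R ι E : Type*} [Fintype ι]

section Algebra

variable [CommRing R] [AddCommGroup E] [Module R E]

def gossip (Q : Matrix ι ι R) (x : ι → E) : ι → E :=
  fun i => ∑ j, Q j i • x j

theorem gossip_add_right (Q : Matrix ι ι R) (x x' : ι → E) :
    gossip Q (x + x') = gossip Q x + gossip Q x' := by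
  ext i
  simp [gossip, smul_add, sum_add_distrib]

theorem gossip_sub_left (Q Q' : Matrix ι ι R) (x : ι → E) :
    gossip (Q - Q') x = gossip Q x - gossip Q' x := by
  ext i
  simp [gossip, sub_smul, sum_sub_distrib]

theorem gossip_one [DecidableEq ι] (x : ι → E) : gossip (1 : Matrix ι ι R) x = x := by
  ext i
  simp [gossip, one_apply, ite_smul]

theorem gossip_mul (Q Q' : Matrix ι ι R) (x : ι → E) :
    gossip (Q * Q') x = gossip Q' (gossip Q x) := by
  ext i
  simp only [gossip, mul_apply, sum_smul, smul_sum, smul_smul]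
  rw [sum_comm]
  simp only [mul_comm]

theorem gossip_const (Q : Matrix ι ι R) (c : E) (i : ι) :
    gossip Q (fun _ => c) i = (∑ j, Q j i) • c :=
  (sum_smul ..).symm

theorem sum_pow_apply_eq_one [DecidableEq ι] {P : Matrix ι ι R}
    (hcol : ∀ i, ∑ j, P j i = 1) (k : ℕ) (i : ι) : ∑ j, (P ^ k) j i = 1 := by
  induction k generalizing i with
  | zero => simp [one_apply]
  | succ k ih =>
    simp only [pow_succ, mul_apply]
    rw [sum_comm]
    simp [← sum_mul, ih, hcol]

end Algebra

section Average

variable (R ι) [Field R]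

def avgMatrix : Matrix ι ι R :=
  of fun _ _ => (Fintype.card ι : R)⁻¹

variable {R ι} [AddCommGroup E] [Module R E]

theorem gossip_avgMatrix (x : ι → E) (i : ι) :
    gossip (avgMatrix R ι) x i = (Fintype.card ι : R)⁻¹ • ∑ j, x j := by
  simp [gossip, avgMatrix, smul_sum]

theorem mul_avgMatrix {P : Matrix ι ι R} (hrow : ∀ i, ∑ j, P i j = 1) :
    P * avgMatrix R ι = avgMatrix R ι := by
  ext i j
  simp [avgMatrix, mul_apply, ← sum_mul, hrow]

theorem gossip_avgMatrix_sub_pow_const [DecidableEq ι] [Nonempty ι] [CharZero R]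
    {P : Matrix ι ι R} (hcol : ∀ i, ∑ j, P j i = 1) (k : ℕ) (c : E) :
    gossip (avgMatrix R ι - P ^ k) (fun _ => c) = 0 := by
  ext i
  simp [gossip_const, sum_sub_distrib, sum_pow_apply_eq_one hcol, avgMatrix]

end Average

section Norm

variable [SeminormedAddCommGroup E] [NormedSpace ℝ E]

theorem norm_gossip_le (Q : Matrix ι ι ℝ) {x : ι → E} {b : ℝ} (hx : ∀ j, ‖x j‖ ≤ b) (i : ι) :
    ‖gossip Q x i‖ ≤ (∑ j, |Q j i|) * b :=
  calc ‖gossip Q x i‖ ≤ ∑ j, ‖Q j i • x j‖ := norm_sum_le _ _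
    _ ≤ ∑ j, |Q j i| * b := by
      gcongr with j
      rw [norm_smul, Real.norm_eq_abs]
      exact mul_le_mul_of_nonneg_left (hx j) (abs_nonneg _)
    _ = (∑ j, |Q j i|) * b := (sum_mul ..).symm

theorem norm_sub_gossip_le_of_forall_norm_sub_le {s : Set E} (hs : Convex ℝ s)
    {Q : Matrix ι ι ℝ} {i : ι} (hQ : ∀ j, 0 ≤ Q j i) (hcol : ∑ j, Q j i = 1) {x : ι → E}
    (hx : ∀ j, x j ∈ s) {p v : E}
    (hp : ∀ y ∈ s, ‖p - (gossip Q x i - v)‖ ≤ ‖y - (gossip Q x i - v)‖) :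
    ‖p - gossip Q x i‖ ≤ 2 * ‖v‖ := by
  have hz : gossip Q x i ∈ s := hs.sum_mem (fun j _ => hQ j) hcol (fun j _ => hx j)
  simpa using norm_sub_le_two_mul_of_forall_norm_sub_le hp hz

theorem sum_abs_one_apply_sub_inv_card_le_sqrt [DecidableEq ι] [Nonempty ι] (i : ι) :
    ∑ j, |(1 : Matrix ι ι ℝ) j i - (Fintype.card ι : ℝ)⁻¹| ≤ √(Fintype.card ι) := by
  set n : ℝ := (Fintype.card ι : ℝ)
  have hn : 1 ≤ n := Nat.one_le_cast.mpr Fintype.card_pos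
  have hterm : ∀ j,
      |(1 : Matrix ι ι ℝ) j i - n⁻¹| = (1 : Matrix ι ι ℝ) j i * (1 - 2 * n⁻¹) + n⁻¹ := by
    intro j
    rcases eq_or_ne j i with rfl | h
    · rw [one_apply_eq, abs_of_nonneg (by linarith [inv_le_one_of_one_le₀ hn])]
      ring
    · simp [one_apply_ne h, abs_of_nonneg (zero_le_one.trans hn)]
  have hsum : ∑ j, |(1 : Matrix ι ι ℝ) j i - n⁻¹| = 2 - 2 / n := by
    rw [sum_congr rfl fun j _ => hterm j, sum_add_distrib, ← sum_mul]
    simp [one_apply, n]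
    field_simp
    ring
  exact hsum.trans_le (two_sub_two_div_le_sqrt hn)

theorem norm_gossip_avgMatrix_sub_pow_le [DecidableEq ι] {P : Matrix ι ι ℝ}
    (hrow : ∀ i, ∑ j, P i j = 1) (hcol : ∀ i, ∑ j, P j i = 1) {C β b : ℝ} (hβ : β < 1)
    (hmix : ∀ k i, ∑ j, |(P ^ k) j i - (Fintype.card ι : ℝ)⁻¹| ≤ C * β ^ k)
    {x : ℕ → ι → E} (hx₀ : ∀ i j, x 0 i = x 0 j)
    (hstep : ∀ n j, ‖x (n + 1) j - gossip P (x n) j‖ ≤ b) (n k : ℕ) (i : ι) :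
    ‖gossip (avgMatrix ℝ ι - P ^ k) (x n) i‖ ≤ C * b * β ^ k / (1 - β) := by
  have hβ' : 0 < 1 - β := by linarith
  have hb : 0 ≤ b := (norm_nonneg _).trans (hstep 0 i)
  induction n generalizing k i with
  | zero =>
    have : Nonempty ι := ⟨i⟩
    have hC : 0 ≤ C * β ^ k := (sum_nonneg fun j _ => abs_nonneg _).trans (hmix k i)
    rw [show x 0 = fun _ => x 0 i from funext fun j => hx₀ j i,
      gossip_avgMatrix_sub_pow_const hcol, Pi.zero_apply, norm_zero, mul_right_comm]
    exact div_nonneg (mul_nonneg hC hb) hβ'.le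
  | succ n ih =>
    set e := x (n + 1) - gossip P (x n)
    have he : ‖gossip (avgMatrix ℝ ι - P ^ k) e i‖ ≤ C * β ^ k * b := by
      refine (norm_gossip_le _ (fun j => hstep n j) i).trans
        (mul_le_mul_of_nonneg_right ?_ hb)
      simpa [avgMatrix, abs_sub_comm] using hmix k i
    have hrec : gossip (avgMatrix ℝ ι - P ^ k) (x (n + 1)) =
        gossip (avgMatrix ℝ ι - P ^ (k + 1)) (x n) + gossip (avgMatrix ℝ ι - P ^ k) e := by
      have hPJ : P * (avgMatrix ℝ ι - P ^ k) = avgMatrix ℝ ι - P ^ (k + 1) := by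
        rw [mul_sub, mul_avgMatrix hrow, pow_succ']
      conv_lhs => rw [← add_sub_cancel (gossip P (x n)) (x (n + 1))]
      rw [gossip_add_right, ← gossip_mul, hPJ]
    calc ‖gossip (avgMatrix ℝ ι - P ^ k) (x (n + 1)) i‖
        ≤ C * b * β ^ (k + 1) / (1 - β) + C * β ^ k * b := by
          rw [hrec, Pi.add_apply]
          exact (norm_add_le _ _).trans (add_le_add (ih (k + 1) i) he)
      _ = C * b * β ^ k / (1 - β) := by
          field_simp
          ring

end Norm

end Matrix

theorem toMat_add {Hn d₁ d₂ : ℕ} (M M' : MTup Hn d₁ d₂) (i : ℕ) :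
    toMat (M + M') i = toMat M i + toMat M' i := by
  ext a b
  by_cases h : i < Hn <;> simp [toMat, h]

theorem toMat_smul {Hn d₁ d₂ : ℕ} (c : ℝ) (M : MTup Hn d₁ d₂) (i : ℕ) :
    toMat (c • M) i = c • toMat M i := by
  ext a b
  by_cases h : i < Hn <;> simp [toMat, h]

theorem convex_MClass (Hn d₁ d₂ : ℕ) (κ γ : ℝ) : Convex ℝ (MClass Hn d₁ d₂ κ γ) := by
  intro M hM M' hM' a b ha hb hab i hi
  calc ‖toMat (a • M + b • M') i‖ ≤ a * ‖toMat M i‖ + b * ‖toMat M' i‖ := by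
        rw [toMat_add, toMat_smul, toMat_smul]
        refine (norm_add_le _ _).trans_eq ?_
        rw [norm_smul, norm_smul, Real.norm_of_nonneg ha, Real.norm_of_nonneg hb]
    _ ≤ a * (2 * κ ^ 3 * (1 - γ) ^ i) + b * (2 * κ ^ 3 * (1 - γ) ^ i) := by
        gcongr
        exacts [hM i hi, hM' i hi]
    _ = 2 * κ ^ 3 * (1 - γ) ^ i := by rw [← add_mul, hab, one_mul]

theorem distributed_iterates_consensus_bound_general {d₁ d₂ : ℕ} (m Hn : ℕ)
    (κ γ η β G : ℝ)
    (hη : 0 < η) (hβ1 : β < 1)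
    (P : Matrix (Fin m) (Fin m) ℝ)
    (hPpos : ∀ i j, 0 ≤ P i j)
    (hProw : ∀ i, ∑ j, P i j = 1) (hPcol : ∀ j, ∑ i, P i j = 1)
    (hmix : ∀ (i : Fin m) (k : ℕ), 1 ≤ k →
      ∑ j, |(P ^ k) j i - 1 / (m : ℝ)| ≤ Real.sqrt m * β ^ k)
    (g : Fin m → ℕ → MTup Hn d₁ d₂) (hg : ∀ i t, ‖g i t‖ ≤ G)
    (Mit Mhat : Fin m → ℕ → MTup Hn d₁ d₂)
    (hinit : ∀ i j : Fin m, Mit i 1 = Mit j 1)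
    (hinitM : ∀ i, Mit i 1 ∈ MClass Hn d₁ d₂ κ γ)
    (hhat : ∀ (i : Fin m) (t : ℕ), 1 ≤ t →
      Mhat i (t + 1) = ∑ j, P j i • Mit j t - η • g i t)
    (hproj : ∀ (i : Fin m) (t : ℕ), 1 ≤ t →
      Mit i (t + 1) ∈ MClass Hn d₁ d₂ κ γ ∧
      ∀ y ∈ MClass Hn d₁ d₂ κ γ,
        ‖Mit i (t + 1) - Mhat i (t + 1)‖ ≤ ‖y - Mhat i (t + 1)‖) :
    ∀ (i : Fin m) (t : ℕ), 1 ≤ t →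
      ‖(m : ℝ)⁻¹ • (∑ j, Mit j t) - Mit i t‖ ≤ 2 * η * G * Real.sqrt m / (1 - β) ∧
      ‖(m : ℝ)⁻¹ • (∑ j, Mit j t) - Mhat i (t + 1)‖ ≤ 2 * η * G * Real.sqrt m / (1 - β) := by
  intro i t ht
  obtain ⟨n, rfl⟩ : ∃ n, t = n + 1 := ⟨t - 1, by omega⟩
  have : Nonempty (Fin m) := ⟨i⟩
  set x : ℕ → Fin m → MTup Hn d₁ d₂ := fun n j => Mit j (n + 1)
  have hmem : ∀ n j, x n j ∈ MClass Hn d₁ d₂ κ γ := by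
    rintro (_ | n) j
    exacts [hinitM j, (hproj j (n + 1) n.succ_pos).1]
  have hηg : ∀ n j, ‖η • g j n‖ ≤ η * G := fun n j => by
    rw [norm_smul, Real.norm_of_nonneg hη.le]
    exact mul_le_mul_of_nonneg_left (hg j n) hη.le
  have hstep : ∀ n j, ‖x (n + 1) j - Matrix.gossip P (x n) j‖ ≤ 2 * (η * G) := fun n j => by
    have hp := (hproj j (n + 1) n.succ_pos).2
    rw [hhat j (n + 1) n.succ_pos] at hp
    exact (Matrix.norm_sub_gossip_le_of_forall_norm_sub_le (convex_MClass Hn d₁ d₂ κ γ)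
      (hPpos · j) (hPcol j) (hmem n) hp).trans (by gcongr; exact hηg _ _)
  have hmix₀ : ∀ k j, ∑ l, |(P ^ k) l j - (Fintype.card (Fin m) : ℝ)⁻¹| ≤ √m * β ^ k := by
    rintro (_ | k) j
    · simpa using Matrix.sum_abs_one_apply_sub_inv_card_le_sqrt j
    · simpa using hmix j (k + 1) k.succ_pos
  have hdev := Matrix.norm_gossip_avgMatrix_sub_pow_le hProw hPcol hβ1 hmix₀ (x := x)
    hinit hstep n
  have h₀ := hdev 0 i
  have h₁ := hdev 1 i
  simp only [Matrix.gossip_sub_left, Pi.sub_apply, Matrix.gossip_avgMatrix, Matrix.gossip_one,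
    Fintype.card_fin, pow_zero, pow_one] at h₀ h₁
  have hsm : 1 ≤ √(m : ℝ) := Real.one_le_sqrt.mpr (Nat.one_le_cast.mpr i.pos)
  have hβ : 0 < 1 - β := by linarith
  have hηG : 0 ≤ η * G := (norm_nonneg _).trans (hηg 0 i)
  refine ⟨by convert h₀ using 1; ring, ?_⟩
  rw [hhat i (n + 1) n.succ_pos, sub_sub_eq_add_sub, add_sub_right_comm]
  refine (norm_add_le _ _).trans ((add_le_add h₁ (hηg _ _)).trans ?_)
  rw [div_add' _ _ _ hβ.ne', div_le_div_iff_of_pos_right hβ]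
  nlinarith [mul_nonneg (mul_nonneg hηG (by linarith : 0 ≤ 2 * √(m : ℝ) - 1)) hβ.le]

/-- consensus bounds for the projected distributed iterates. -/
theorem distributed_iterates_consensus_bound {d₁ d₂ : ℕ} (m Hn : ℕ)
    (hm : 1 ≤ m) (hH : 1 ≤ Hn)
    (κ γ W Gc η β G D : ℝ)
    (hκ : 1 ≤ κ) (hγ0 : 0 < γ) (hγ1 : γ ≤ 1) (hW : 1 ≤ W) (hGc : 1 ≤ Gc)
    (hgeom : κ ^ 2 * (1 - γ) ^ (Hn + 1) < 1)
    (hη : 0 < η) (hβ0 : 0 ≤ β) (hβ1 : β < 1)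
    (hD : D = W * (κ ^ 2 + 2 * Hn * κ ^ 6) / (γ * (1 - κ ^ 2 * (1 - γ) ^ (Hn + 1))) +
        2 * W * κ ^ 3 / γ)
    (hG : G = Gc * D * Real.sqrt ((max d₁ d₂ : ℕ) : ℝ) * ((max d₁ d₂ : ℕ) : ℝ) *
        Real.sqrt Hn * (κ ^ 4 * W / γ + W))
    (P : Matrix (Fin m) (Fin m) ℝ)
    (hPpos : ∀ i j, 0 ≤ P i j)
    (hProw : ∀ i, ∑ j, P i j = 1) (hPcol : ∀ j, ∑ i, P i j = 1)
    (hmix : ∀ (i : Fin m) (k : ℕ), 1 ≤ k →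
      ∑ j, |(P ^ k) j i - 1 / (m : ℝ)| ≤ Real.sqrt m * β ^ k)
    (g : Fin m → ℕ → MTup Hn d₁ d₂) (hg : ∀ i t, ‖g i t‖ ≤ G)
    (Mit Mhat : Fin m → ℕ → MTup Hn d₁ d₂)
    (hinit : ∀ i j : Fin m, Mit i 1 = Mit j 1)
    (hinitM : ∀ i, Mit i 1 ∈ MClass Hn d₁ d₂ κ γ)
    (hhat : ∀ (i : Fin m) (t : ℕ), 1 ≤ t →
      Mhat i (t + 1) = ∑ j, P j i • Mit j t - η • g i t)
    (hproj : ∀ (i : Fin m) (t : ℕ), 1 ≤ t →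
      Mit i (t + 1) ∈ MClass Hn d₁ d₂ κ γ ∧
      ∀ y ∈ MClass Hn d₁ d₂ κ γ,
        ‖Mit i (t + 1) - Mhat i (t + 1)‖ ≤ ‖y - Mhat i (t + 1)‖) :
    ∀ (i : Fin m) (t : ℕ), 1 ≤ t →
      ‖(m : ℝ)⁻¹ • (∑ j, Mit j t) - Mit i t‖ ≤ 2 * η * G * Real.sqrt m / (1 - β) ∧
      ‖(m : ℝ)⁻¹ • (∑ j, Mit j t) - Mhat i (t + 1)‖ ≤ 2 * η * G * Real.sqrt m / (1 - β) :=
  distributed_iterates_consensus_bound_general m Hn κ γ η β G hη hβ1 P hPpos hProw hPcol hmix g hg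
    Mit Mhat hinit hinitM hhat hproj
end

section
/- Let A ∈ ℝ^{d₁×d₁}, B ∈ ℝ^{d₁×d₂}, K ∈ ℝ^{d₂×d₁} with ‖A‖, ‖B‖, ‖K‖ ≤ κ and κ ≥ 1, and set A′ := A − BK. Let q ≥ 1 and C_q := [B, A′B, (A′)²B, …, (A′)^{q−1}B] ∈ ℝ^{d₁× q d₂}, and suppose ‖C_q^T v‖ ≥ (1/√κ)‖v‖ for every v ∈ ℝ^{d₁} (which holds in particular when ‖(C_q C_q^T)^{−1}‖ ≤ κ). Let ε > 0 with √q ε ≤ 1/(2√κ), and let N_0, …, N_q be d₁×d₂ matrices with ‖N_{k−1} − (A′)^{k−1} B‖ ≤ ε for every k ∈ {1,…,q+1}. Set C_0 := [N_0,…,N_{q−1}], C_1 := [N_1,…,N_q], B̂ := N_0. If Â′ ∈ ℝ^{d₁×d₁} satisfies Â′ C_0 = C_1, then ‖Â′ − A′‖ ≤ 6 √(d₁ q) κ^{5/2} ε, and the matrices Â := Â′ + B̂ K and B̂ satisfy ‖Â − A‖ ≤ 7 √(d₁ q) κ^{5/2} ε and ‖B̂ − B‖ ≤ ε. -/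
/- Common setup: spectral norm on matrices, Euclidean vectors, strong stability,
disturbance-state transfer matrices and surrogate states/actions from the paper
"Distributed Online Control over Networks of LTI systems". -/

open scoped Matrix.Norms.L2Operator

/-!
Subtracting the shift relation `A' C_q = [A'B, …, (A')^q B]` of the true Markov parameters from
`Â' C₀ = C₁` gives `(Â' − A') C₀ = (C₁ − A' C_q) − A' (C₀ − C_q)`. Each of the `q` column blocks of
`C₀ − C_q` and of `C₁ − A' C_q` has norm at most `ε`, so both matrices have norm at most `√q ε`, and
the right-hand side is `O(κ² √q ε)`. Being `√q ε`-close to `C_q`, the matrix `C₀ᵀ` keeps half of the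
lower bound `1/√κ` of `C_qᵀ`, so cancelling `C₀` costs a factor `2√κ`.
-/

open scoped Matrix

section MatrixNorm

variable {m n : Type*} [Fintype m] [Fintype n] [DecidableEq n]

lemma norm_mulV_le (A : Matrix m n ℝ) (x : EuclideanSpace ℝ n) : ‖mulV A x‖ ≤ ‖A‖ * ‖x‖ :=
  A.l2_opNorm_mulVec x

lemma norm_le_of_forall_norm_mulV_le {A : Matrix m n ℝ} {C : ℝ} (hC : 0 ≤ C)
    (h : ∀ x, ‖mulV A x‖ ≤ C * ‖x‖) : ‖A‖ ≤ C :=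
  ContinuousLinearMap.opNorm_le_bound _ hC h

lemma norm_transpose_eq [DecidableEq m] (A : Matrix m n ℝ) : ‖Aᵀ‖ = ‖A‖ := by
  rw [← Matrix.conjTranspose_eq_transpose_of_trivial, Matrix.l2_opNorm_conjTranspose]

omit [DecidableEq n] in
lemma mulV_mul {p : Type*} [Fintype p] (A : Matrix m n ℝ) (B : Matrix n p ℝ)
    (x : EuclideanSpace ℝ p) : mulV (A * B) x = mulV A (mulV B x) := by
  simp [mulV, Matrix.mulVec_mulVec]

omit [DecidableEq n] in
lemma mulV_add (A B : Matrix m n ℝ) (x : EuclideanSpace ℝ n) :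
    mulV (A + B) x = mulV A x + mulV B x := by
  simp [mulV, Matrix.add_mulVec]

lemma norm_le_sqrt_card_mul_of_blocks_le [DecidableEq m] {ι : Type*} [Fintype ι]
    [DecidableEq ι] {E : Matrix m (ι × n) ℝ} {P : ι → Matrix m n ℝ} {ε : ℝ} (hε : 0 ≤ ε)
    (hE : ∀ a k b, E a (k, b) = P k a b) (hP : ∀ k, ‖P k‖ ≤ ε) :
    ‖E‖ ≤ √(Fintype.card ι) * ε := by
  rw [← norm_transpose_eq]
  refine norm_le_of_forall_norm_mulV_le (by positivity) fun w => ?_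
  have hblock : ∀ k, ‖mulV (P k)ᵀ w‖ ^ 2 ≤ (ε * ‖w‖) ^ 2 := fun k => by
    gcongr
    exact (norm_mulV_le _ w).trans (by rw [norm_transpose_eq]; gcongr; exact hP k)
  rw [← pow_le_pow_iff_left₀ (norm_nonneg _) (by positivity) two_ne_zero, mul_pow, mul_pow,
    Real.sq_sqrt (Nat.cast_nonneg _), EuclideanSpace.norm_sq_eq, Fintype.sum_prod_type]
  calc ∑ k, ∑ b, ‖mulV Eᵀ w (k, b)‖ ^ 2 = ∑ k, ‖mulV (P k)ᵀ w‖ ^ 2 := by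
        simp [EuclideanSpace.norm_sq_eq, mulV, Matrix.mulVec, dotProduct, hE]
    _ ≤ ∑ _k : ι, (ε * ‖w‖) ^ 2 := Finset.sum_le_sum fun k _ => hblock k
    _ = _ := by simp; ring

lemma le_norm_mulV_transpose_of_norm_sub_le [DecidableEq m] {M M' : Matrix m n ℝ} {c δ : ℝ}
    (hM : ∀ v, c * ‖v‖ ≤ ‖mulV Mᵀ v‖) (h : ‖M' - M‖ ≤ δ) (v : EuclideanSpace ℝ m) :
    (c - δ) * ‖v‖ ≤ ‖mulV M'ᵀ v‖ := by
  have hsplit : mulV M'ᵀ v = mulV Mᵀ v + mulV (M' - M)ᵀ v := by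
    rw [← mulV_add, ← Matrix.transpose_add, add_sub_cancel]
  have herr : ‖mulV (M' - M)ᵀ v‖ ≤ δ * ‖v‖ :=
    (norm_mulV_le _ v).trans (by rw [norm_transpose_eq]; gcongr)
  have hM' : ‖mulV Mᵀ v‖ ≤ ‖mulV M'ᵀ v‖ + ‖mulV (M' - M)ᵀ v‖ :=
    calc ‖mulV Mᵀ v‖ = ‖mulV M'ᵀ v - mulV (M' - M)ᵀ v‖ := by rw [hsplit, add_sub_cancel_right]
      _ ≤ _ := norm_sub_le _ _
  linarith [hM v]

lemma norm_le_div_of_mul_eq [DecidableEq m] {p : Type*} [Fintype p] [DecidableEq p]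
    {M : Matrix m n ℝ} {D : Matrix p m ℝ} {F : Matrix p n ℝ} {c : ℝ} (hc : 0 < c)
    (hM : ∀ v, c * ‖v‖ ≤ ‖mulV Mᵀ v‖) (hDM : D * M = F) : ‖D‖ ≤ ‖F‖ / c := by
  rw [← norm_transpose_eq]
  refine norm_le_of_forall_norm_mulV_le (by positivity) fun v => ?_
  have h := (hM (mulV Dᵀ v)).trans_eq (by rw [← mulV_mul, ← Matrix.transpose_mul, hDM])
  rw [div_mul_eq_mul_div, le_div_iff₀ hc]
  linarith [(norm_mulV_le Fᵀ v).trans_eq (by rw [norm_transpose_eq])]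

theorem norm_sub_le_of_mul_eq_of_approx [DecidableEq m] {X Y : Matrix m m ℝ}
    {M M₀ M₁ : Matrix m n ℝ} {c δ : ℝ} (hM : ∀ v, c * ‖v‖ ≤ ‖mulV Mᵀ v‖) (hc : 0 < c)
    (hδ : 2 * δ ≤ c) (h₀ : ‖M₀ - M‖ ≤ δ) (h₁ : ‖M₁ - X * M‖ ≤ δ) (hY : Y * M₀ = M₁) :
    ‖Y - X‖ ≤ 2 * (1 + ‖X‖) * δ / c := by
  have hshift : (Y - X) * M₀ = (M₁ - X * M) - X * (M₀ - M) := by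
    rw [Matrix.sub_mul, hY, Matrix.mul_sub]; abel
  have hM₀ : ∀ v, c / 2 * ‖v‖ ≤ ‖mulV M₀ᵀ v‖ := fun v =>
    (mul_le_mul_of_nonneg_right (by linarith) (norm_nonneg v)).trans
      (le_norm_mulV_transpose_of_norm_sub_le hM h₀ v)
  calc ‖Y - X‖ ≤ ‖(M₁ - X * M) - X * (M₀ - M)‖ / (c / 2) :=
        norm_le_div_of_mul_eq (half_pos hc) hM₀ hshift
    _ ≤ (δ + ‖X‖ * δ) / (c / 2) := by
        gcongr
        exact (norm_sub_le _ _).trans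
          (add_le_add h₁ ((Matrix.l2_opNorm_mul _ _).trans (by gcongr)))
    _ = 2 * (1 + ‖X‖) * δ / c := by field_simp

lemma one_add_norm_sub_mul_le {p : Type*} [Fintype p] [DecidableEq p] [DecidableEq m]
    {A : Matrix m m ℝ} {B : Matrix m p ℝ} {K : Matrix p m ℝ} {κ : ℝ} (hκ : 1 ≤ κ)
    (hA : ‖A‖ ≤ κ) (hB : ‖B‖ ≤ κ) (hK : ‖K‖ ≤ κ) : 1 + ‖A - B * K‖ ≤ 3 * κ ^ 2 := by
  have hBK : ‖B * K‖ ≤ κ * κ := (Matrix.l2_opNorm_mul B K).trans (by gcongr)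
  nlinarith [norm_sub_le A (B * K)]

lemma norm_add_mul_sub_le {p : Type*} [Fintype p] [DecidableEq p] [DecidableEq m]
    (Y A : Matrix m m ℝ) (B B' : Matrix m p ℝ) (K : Matrix p m ℝ) :
    ‖(Y + B' * K) - A‖ ≤ ‖Y - (A - B * K)‖ + ‖B' - B‖ * ‖K‖ := by
  calc ‖(Y + B' * K) - A‖ = ‖(Y - (A - B * K)) + (B' - B) * K‖ := by
        rw [Matrix.sub_mul]; abel_nf
    _ ≤ _ := (norm_add_le _ _).trans (by gcongr; exact Matrix.l2_opNorm_mul _ _)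

end MatrixNorm

lemma rpow_five_halves_eq {κ : ℝ} (hκ : 0 ≤ κ) : κ ^ ((5 : ℝ) / 2) = κ ^ 2 * √κ := by
  rw [Real.sqrt_eq_rpow, ← Real.rpow_natCast κ 2, ← Real.rpow_add' hκ (by norm_num)]
  norm_num

/-- estimation error of the system identification step. -/
theorem system_identification_error {d₁ d₂ q : ℕ} (hq : 1 ≤ q) (κ ε : ℝ)
    (hκ : 1 ≤ κ) (hε : 0 < ε)
    (A : Mat d₁ d₁) (B : Mat d₁ d₂) (K : Mat d₂ d₁)
    (hA : ‖A‖ ≤ κ) (hB : ‖B‖ ≤ κ) (hK : ‖K‖ ≤ κ)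
    (Cq : Matrix (Fin d₁) (Fin q × Fin d₂) ℝ)
    (hCq : ∀ (a : Fin d₁) (k : Fin q) (b : Fin d₂),
      Cq a (k, b) = ((A - B * K) ^ (k : ℕ) * B) a b)
    (hlow : ∀ v : Vec d₁, (1 / Real.sqrt κ) * ‖v‖ ≤ ‖mulV Cq.transpose v‖)
    (hqε : Real.sqrt q * ε ≤ 1 / (2 * Real.sqrt κ))
    (N : ℕ → Mat d₁ d₂)
    (hN : ∀ k, k ≤ q → ‖N k - (A - B * K) ^ k * B‖ ≤ ε)
    (C₀ C₁ : Matrix (Fin d₁) (Fin q × Fin d₂) ℝ)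
    (hC₀ : ∀ (a : Fin d₁) (k : Fin q) (b : Fin d₂), C₀ a (k, b) = N k a b)
    (hC₁ : ∀ (a : Fin d₁) (k : Fin q) (b : Fin d₂), C₁ a (k, b) = N (k + 1) a b)
    (Ahat' : Mat d₁ d₁) (hAhat' : Ahat' * C₀ = C₁) :
    ‖Ahat' - (A - B * K)‖ ≤ 6 * Real.sqrt (d₁ * q) * κ ^ ((5 : ℝ) / 2) * ε ∧
    ‖(Ahat' + N 0 * K) - A‖ ≤ 7 * Real.sqrt (d₁ * q) * κ ^ ((5 : ℝ) / 2) * ε ∧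
    ‖N 0 - B‖ ≤ ε := by
  have hB₀ : ‖N 0 - B‖ ≤ ε := by simpa using hN 0 q.zero_le
  rcases Nat.eq_zero_or_pos d₁ with rfl | hd₁
  · simp [Subsingleton.elim _ (0 : Mat 0 0), hB₀]
  set A' := A - B * K
  have hE₀ : ‖C₀ - Cq‖ ≤ √q * ε := by
    simpa using norm_le_sqrt_card_mul_of_blocks_le (P := fun k : Fin q => N k - A' ^ (k : ℕ) * B)
      hε.le (by simp [hC₀, hCq]) fun k => hN k k.2.le
  have hE₁ : ‖C₁ - A' * Cq‖ ≤ √q * ε := by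
    simpa using norm_le_sqrt_card_mul_of_blocks_le
      (P := fun k : Fin q => N (k + 1) - A' ^ (k + 1 : ℕ) * B) hε.le
      (by simp [hC₁, hCq, Matrix.mul_apply, pow_succ', Matrix.mul_assoc]) fun k => hN (k + 1) k.2
  have hκ₀ : 0 < κ := one_pos.trans_le hκ
  have hD : ‖Ahat' - A'‖ ≤ 6 * √q * κ ^ ((5 : ℝ) / 2) * ε := calc
    ‖Ahat' - A'‖ ≤ 2 * (1 + ‖A'‖) * (√q * ε) / (1 / √κ) :=
        norm_sub_le_of_mul_eq_of_approx hlow (by positivity)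
          (by linarith [show 2 * (1 / (2 * √κ)) = 1 / √κ by field_simp]) hE₀ hE₁ hAhat'
    _ ≤ 2 * (3 * κ ^ 2) * (√q * ε) / (1 / √κ) := by
        gcongr; exact one_add_norm_sub_mul_le hκ hA hB hK
    _ = 6 * √q * κ ^ ((5 : ℝ) / 2) * ε := by rw [rpow_five_halves_eq hκ₀.le]; field_simp; ring
  have hsq : √q ≤ √(d₁ * q) := Real.sqrt_le_sqrt (le_mul_of_one_le_left q.cast_nonneg (by simpa))
  have hs₁ : 1 ≤ √(d₁ * q) := hsq.trans' (Real.one_le_sqrt.2 (by exact_mod_cast hq))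
  have hκε : ε * κ ≤ √(d₁ * q) * κ ^ ((5 : ℝ) / 2) * ε := by
    rw [mul_comm ε]
    gcongr
    exact (Real.self_le_rpow_of_one_le hκ (by norm_num)).trans
      (le_mul_of_one_le_left (by positivity) hs₁)
  have hD' : ‖Ahat' - A'‖ ≤ 6 * √(d₁ * q) * κ ^ ((5 : ℝ) / 2) * ε := hD.trans (by gcongr)
  refine ⟨hD', (norm_add_mul_sub_le _ _ B _ _).trans ?_, hB₀⟩
  have hNK : ‖N 0 - B‖ * ‖K‖ ≤ ε * κ := by gcongr
  linarith
end
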